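/- Let A be a Hopf algebra and L a unital symmetric partial A-module algebra, with φ: L → Hom(A,L), φ(x)(a) = a·x, and R = A ▷ φ(L). Then the following are equivalent: (i) φ(L) is a two-sided ideal of R; (ii) (a ▷ φ(x))·φ(y) = φ((a·x)y) for all a ∈ A, x,y ∈ L; (iii) the partial action of A on L is symmetric, i.e., c·((a·x)y) = (c₁a·x)(c₂·y) for all a,c ∈ A and x,y ∈ L. -/

import Mathlib

/-!
The map `φ = pact.flip`, `φ x a = a·x`, is injective with left inverse "evaluate at `1`",
since `1·x = x` and `(f * g)(1) = f(1) g(1)` for the convolution product. The partial module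
algebra axiom says precisely that `φ(x) (b ▷ φ(y)) = φ(x (b·y))`, so `φ(L) R ⊆ φ(L)` always
holds by linearity; `R φ(L) ⊆ φ(L)` iff every product `(a ▷ φ(x)) φ(y)` lies in `φ(L)`, and
then evaluating at `1` forces that product to be `φ((a·x) y)`. Evaluating (ii) at `c` gives (iii).
-/

open TensorProduct

variable {k A L : Type*}

/-- Sweedler-style convolution: `conv f g = Σ f(a₁) * g(a₂)` as a linear map on `A`. -/
noncomputable def conv [Field k] [Ring A] [HopfAlgebra k A] [Ring L] [Algebra k L]
    (f g : A →ₗ[k] L) : A →ₗ[k] L :=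
  TensorProduct.lift ((LinearMap.mul k L).compl₁₂ f g) ∘ₗ Coalgebra.comul

section Convolution

variable [Field k] [Ring A] [HopfAlgebra k A] [Ring L] [Algebra k L]

open WithConv

lemma conv_eq_ofConv_mul (f g : A →ₗ[k] L) : conv f g = (toConv f * toConv g).ofConv := by
  change _ = LinearMap.mul' k L ∘ₗ TensorProduct.map f g ∘ₗ Coalgebra.comul
  rw [conv, ← LinearMap.comp_assoc]
  congr 1
  exact TensorProduct.ext' fun _ _ => rfl

variable (k A L) in
noncomputable def convBilin : (A →ₗ[k] L) →ₗ[k] (A →ₗ[k] L) →ₗ[k] A →ₗ[k] L :=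
  let e := WithConv.linearEquiv k (A →ₗ[k] L)
  ((LinearMap.mul k (WithConv (A →ₗ[k] L))).compl₁₂ e.symm.toLinearMap
    e.symm.toLinearMap).compr₂ e.toLinearMap

@[simp]
lemma convBilin_apply (f g : A →ₗ[k] L) : convBilin k A L f g = conv f g := by
  simp [convBilin, conv_eq_ofConv_mul]

lemma conv_apply_one (f g : A →ₗ[k] L) : conv f g 1 = f 1 * g 1 := by
  simp [conv, Bialgebra.comul_one, Algebra.TensorProduct.one_def]

lemma conv_mem_of_right_mem_span {S : Set (A →ₗ[k] L)} {M : Submodule k (A →ₗ[k] L)}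
    {f g : A →ₗ[k] L} (hS : ∀ h ∈ S, conv f h ∈ M) (hg : g ∈ Submodule.span k S) :
    conv f g ∈ M := by
  have : Submodule.span k S ≤ M.comap (convBilin k A L f) :=
    Submodule.span_le.2 fun h hh => by simpa using hS h hh
  simpa using this hg

lemma conv_mem_of_left_mem_span {S : Set (A →ₗ[k] L)} {M : Submodule k (A →ₗ[k] L)}
    {f g : A →ₗ[k] L} (hS : ∀ h ∈ S, conv h g ∈ M) (hf : f ∈ Submodule.span k S) :
    conv f g ∈ M := by
  have : Submodule.span k S ≤ M.comap ((convBilin k A L).flip g) :=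
    Submodule.span_le.2 fun h hh => by simpa using hS h hh
  simpa using this hf

end Convolution

/-- With `φ(x)(a) = a·x` and `R = A ▷ φ(L)`, the following are
equivalent: (i) `φ(L)` is a (two-sided) ideal of `R`;
(ii) `(a ▷ φ(x)) φ(y) = φ((a·x)y)` for all `a, x, y`;
(iii) the partial action is symmetric: `c·((a·x)y) = Σ (c₁a·x)(c₂·y)`. -/
theorem phiL_ideal_iff_symmetric
    [Field k] [Ring A] [HopfAlgebra k A] [Ring L] [Algebra k L]
    (pact : A →ₗ[k] L →ₗ[k] L)
    (hp_one : ∀ x : L, pact 1 x = x)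
    (hp_comp : ∀ (a b : A), ∀ x y : L,
      pact a (x * pact b y) =
        conv (pact.flip x) ((pact.flip y) ∘ₗ LinearMap.mulRight k b) a) :
    ∀ R : Submodule k (A →ₗ[k] L),
      R = Submodule.span k
            {f | ∃ (a : A) (x : L), f = (pact.flip x) ∘ₗ LinearMap.mulRight k a} →
      -- (i) φ(L) is a two-sided ideal of R
      (((∀ (x : L), ∀ g ∈ R, conv (pact.flip x) g ∈ Set.range pact.flip) ∧
        (∀ (x : L), ∀ g ∈ R, conv g (pact.flip x) ∈ Set.range pact.flip))
      ↔
      -- (ii) (a ▷ φ(x)) φ(y) = φ((a·x)y)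
      (∀ (a : A) (x y : L),
        conv ((pact.flip x) ∘ₗ LinearMap.mulRight k a) (pact.flip y) =
          pact.flip (pact a x * y))) ∧
      ((∀ (a : A) (x y : L),
        conv ((pact.flip x) ∘ₗ LinearMap.mulRight k a) (pact.flip y) =
          pact.flip (pact a x * y))
      ↔
      -- (iii) the partial action is symmetric
      (∀ (a c : A) (x y : L),
        pact c (pact a x * y) =
          conv ((pact.flip x) ∘ₗ LinearMap.mulRight k a) (pact.flip y) c)) := by
  rintro R rfl
  refine ⟨⟨fun ⟨_, right_ideal⟩ a x y => ?_, fun hii => ⟨fun x g hg => ?_, fun y g hg => ?_⟩⟩, ?_⟩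
  · obtain ⟨z, hz⟩ := right_ideal y _ (Submodule.subset_span ⟨a, x, rfl⟩)
    have hz_one : z = pact a x * y := by
      simpa [hp_one, conv_apply_one] using LinearMap.congr_fun hz 1
    rw [← hz, hz_one]
  · refine conv_mem_of_right_mem_span (M := LinearMap.range pact.flip) ?_ hg
    rintro _ ⟨b, y, rfl⟩
    exact ⟨x * pact b y, LinearMap.ext fun c => hp_comp c b x y⟩
  · refine conv_mem_of_left_mem_span (M := LinearMap.range pact.flip) ?_ hg
    rintro _ ⟨b, x, rfl⟩
    exact ⟨pact b x * y, (hii b x y).symm⟩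
  · simp only [LinearMap.ext_iff, LinearMap.flip_apply]
    exact ⟨fun h a c x y => (h a x y c).symm, fun h a x y c => (h a c x y).symm⟩
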